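/- Let N and k be positive natural numbers, and let 0 ≤ δ < 0.624. Then there exist constants C > 0 and D > 0, depending only on δ, such that the following holds: for every matrix A ∈ ℂ^{N×N} whose 2k-th restricted isometry constant δ_{2k} satisfies δ_{2k} ≤ δ, every vector x̂ ∈ ℂ^N, every y ∈ ℂ^N and every η'' ≥ 0 with ‖A x̂ − y‖₂ ≤ √N·η'', any vector x̂* that solves the modified basis-pursuit problem min_{z ∈ ℂ^N} ‖z‖₁ subject to ‖A z − y‖₂ ≤ √N·η'' (i.e. ‖A x̂* − y‖₂ ≤ √N·η'' and ‖x̂*‖₁ ≤ ‖z‖₁ for every z ∈ ℂ^N with ‖A z − y‖₂ ≤ √N·η'') satisfies ‖x̂ − x̂*‖₁ ≤ C·σ_k(x̂)₁ + D·√(k·N)·η''. -/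

import Mathlib

open Finset

/-- The ℓ₁ norm of a vector in ℂ^N. -/
noncomputable def l1 {N : ℕ} (v : Fin N → ℂ) : ℝ := ∑ i, ‖v i‖

/-- The Euclidean (ℓ₂) norm of a vector in ℂ^N. -/
noncomputable def l2 {N : ℕ} (v : Fin N → ℂ) : ℝ := Real.sqrt (∑ i, ‖v i‖ ^ 2)

/-- The ℓ∞ (maximum-modulus) norm of a vector in ℂ^N. -/
noncomputable def linf {N : ℕ} (v : Fin N → ℂ) : ℝ := ⨆ i, ‖v i‖

/-- The number of nonzero entries of a vector (its "ℓ₀ norm"). -/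
noncomputable def l0 {N : ℕ} (v : Fin N → ℂ) : ℕ := (Finset.univ.filter fun i => v i ≠ 0).card

/-- The best k-term approximation error in ℓ₁ norm:
    σ_k(x)₁ = inf { ‖x − z‖₁ : z is k-sparse }. -/
noncomputable def sigma1 {N : ℕ} (k : ℕ) (x : Fin N → ℂ) : ℝ :=
  sInf {t : ℝ | ∃ z : Fin N → ℂ, l0 z ≤ k ∧ t = l1 (x - z)}

/-!
The restricted isometry property with `δ₂ₖ < 4/√41` gives the robust null space property
(Foucart–Rauhut, Theorem 6.13). Sort the entries of `v` by decreasing modulus and cut them into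
blocks `S₀, S₁, …` of `k` consecutive entries. Since `v_{S₀} + c v_{Sⱼ}` is `2k`-sparse for every
real `c`, the RIP bounds `⟨A v_{S₀}, A v_{Sⱼ}⟩`, which leads to
`√(1 - δ²) ‖v_{S₀}‖₂ ≤ √(1 + δ) ‖Av‖₂ + δ ∑ⱼ ‖v_{Sⱼ}‖₂`.
As consecutive blocks are ordered, `√k ∑ⱼ ‖v_{Sⱼ}‖₂ ≤ ‖v_{S₀ᶜ}‖₁ + ‖v_{S₀}‖₁ / 4`
(Foucart–Rauhut, Lemma 6.14), whence `‖v_S‖₁ ≤ ρ ‖v_{Sᶜ}‖₁ + τ ‖Av‖₂` for `#S ≤ k`, with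
`ρ = δ / (√(1 - δ²) - δ/4)`. Applied to `v = x̂ - x̂*`, for which `‖Av‖₂ ≤ 2√N η''` and
`‖x̂*‖₁ ≤ ‖x̂‖₁` because `x̂` is feasible, this yields the bound exactly as for basis pursuit.
-/

open Matrix
open scoped InnerProductSpace

theorem sq_le_mul_of_forall_quadratic_nonneg {a b e : ℝ}
    (h : ∀ c : ℝ, 0 ≤ a + 2 * c * b + c ^ 2 * e) : b ^ 2 ≤ a * e := by
  have := discrim_le_zero (a := e) (b := 2 * b) (c := a) fun c => by linarith [h c]
  rw [discrim] at this
  linarith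

theorem sq_mul_sq_mul_one_sub_sq_le {t r δ p X R : ℝ}
    (h : ∀ c : ℝ, (1 - δ) * (t ^ 2 + c ^ 2 * r ^ 2) ≤ p + 2 * c * X + c ^ 2 * R ∧
      p + 2 * c * X + c ^ 2 * R ≤ (1 + δ) * (t ^ 2 + c ^ 2 * r ^ 2)) :
    X ^ 2 * t ^ 2 * (1 - δ ^ 2) ≤ δ ^ 2 * p ^ 2 * r ^ 2 := by
  set α := p - (1 - δ) * t ^ 2
  set β := (1 + δ) * t ^ 2 - p
  have hα : 0 ≤ α := by linarith [(h 0).1]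
  have hβ : 0 ≤ β := by linarith [(h 0).2]
  have hXα : X ^ 2 ≤ α * (R - (1 - δ) * r ^ 2) :=
    sq_le_mul_of_forall_quadratic_nonneg fun c => by linarith [(h c).1]
  have hXβ : (-X) ^ 2 ≤ β * ((1 + δ) * r ^ 2 - R) :=
    sq_le_mul_of_forall_quadratic_nonneg fun c => by linarith [(h c).2]
  have hαβ : X ^ 2 * t ^ 2 ≤ α * β * r ^ 2 := by
    rcases le_total ((R - (1 - δ) * r ^ 2) * t ^ 2) (β * r ^ 2) with hR | hR
    · nlinarith [mul_le_mul_of_nonneg_left hR hα, sq_nonneg t]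
    · have : ((1 + δ) * r ^ 2 - R) * t ^ 2 ≤ α * r ^ 2 := by linarith
      nlinarith [mul_le_mul_of_nonneg_left this hβ, sq_nonneg t]
  -- `αβ(1 - δ²) = δ²p² - (p - (1 - δ²)t²)²`
  rcases le_total 0 (1 - δ ^ 2) with hδ | hδ
  · nlinarith [mul_le_mul_of_nonneg_right hαβ hδ, sq_nonneg (p - (1 - δ ^ 2) * t ^ 2)]
  · nlinarith [mul_nonneg (mul_nonneg (sq_nonneg X) (sq_nonneg t)) (neg_nonneg.2 hδ),
      sq_nonneg (δ * p * r)]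

/-- Foucart–Rauhut, Lemma 6.14. -/
theorem sqrt_mul_sqrt_sum_sq_le {ι : Type*} {T : Finset ι} {a : ι → ℝ} {k : ℕ} {lo hi : ℝ}
    (hlo : 0 ≤ lo) (hlohi : lo ≤ hi) (hT : #T ≤ k) (ha : ∀ i ∈ T, lo ≤ a i ∧ a i ≤ hi)
    (hfull : #T = k ∨ lo = 0) :
    √k * √(∑ i ∈ T, a i ^ 2) ≤ ∑ i ∈ T, a i + k * (hi - lo) / 4 := by
  set s := ∑ i ∈ T, a i
  set q := ∑ i ∈ T, a i ^ 2
  have hs : 0 ≤ s := sum_nonneg fun i hi => hlo.trans (ha i hi).1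
  have hspread : q ≤ (hi + lo) * s - #T * (lo * hi) := by
    have := sum_nonneg fun i hi => mul_nonneg (sub_nonneg.2 (ha i hi).1) (sub_nonneg.2 (ha i hi).2)
    have hexp : ∑ i ∈ T, (a i - lo) * (hi - a i) = (hi + lo) * s - q - #T * (lo * hi) := by
      simp only [s, q, mul_sum, ← sum_const, ← nsmul_eq_mul, ← sum_sub_distrib]
      exact sum_congr rfl fun i _ => by ring
    linarith
  have hk : (#T : ℝ) ≤ k := by exact_mod_cast hT
  have hkq : k * q ≤ (s + k * (hi - lo) / 4) ^ 2 := by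
    rcases hfull with hT | rfl
    · rw [hT] at hspread
      nlinarith [sq_nonneg (s - k * (hi + 3 * lo) / 4), mul_nonneg hlo (sub_nonneg.2 hlohi),
        mul_nonneg (mul_nonneg (sq_nonneg (k : ℝ)) hlo) (sub_nonneg.2 hlohi)]
    · nlinarith [sq_nonneg (s - k * hi / 4), mul_nonneg (Nat.cast_nonneg (α := ℝ) k) hs]
  rw [← Real.sqrt_mul (Nat.cast_nonneg _), Real.sqrt_le_iff]
  exact ⟨by nlinarith [Nat.cast_nonneg (α := ℝ) k], hkq⟩

theorem sum_le_sum_of_card_le_of_forall_notMem_le {ι : Type*} [DecidableEq ι] {f : ι → ℝ}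
    {R S : Finset ι} (hf : ∀ i ∈ S, 0 ≤ f i) (hS : ∀ i ∈ S, ∀ j ∉ S, f j ≤ f i) (hRS : #R ≤ #S) :
    ∑ i ∈ R, f i ≤ ∑ i ∈ S, f i := by
  have hcard : #(R \ S) ≤ #(S \ R) := by
    have := card_inter_add_card_sdiff R S
    have := card_inter_add_card_sdiff S R
    rw [inter_comm] at this
    omega
  have hdiff : ∑ i ∈ R \ S, f i ≤ ∑ i ∈ S \ R, f i := by
    rcases (S \ R).eq_empty_or_nonempty with hSR | hSR
    · rw [hSR, card_empty, Nat.le_zero, card_eq_zero] at hcard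
      simp [hcard, hSR]
    obtain ⟨m, hm, hmin⟩ := exists_min_image (S \ R) f hSR
    calc ∑ i ∈ R \ S, f i ≤ #(R \ S) • f m :=
          sum_le_card_nsmul _ _ _ fun i hi => hS m (mem_sdiff.1 hm).1 i (mem_sdiff.1 hi).2
      _ ≤ #(S \ R) • f m := nsmul_le_nsmul_left (hf m (mem_sdiff.1 hm).1) hcard
      _ ≤ ∑ i ∈ S \ R, f i := card_nsmul_le_sum _ _ _ hmin
  rw [← sum_inter_add_sum_sdiff R S, ← sum_inter_add_sum_sdiff S R, inter_comm]
  exact add_le_add_right hdiff _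

section NearIsometry

variable {𝕜 E F : Type*} [RCLike 𝕜] [NormedAddCommGroup E] [InnerProductSpace 𝕜 E]
  [NormedAddCommGroup F] [InnerProductSpace 𝕜 F]

def IsNearIsometryOn (T : E →ₗ[𝕜] F) (V : Set E) (δ : ℝ) : Prop :=
  ∀ x ∈ V, (1 - δ) * ‖x‖ ^ 2 ≤ ‖T x‖ ^ 2 ∧ ‖T x‖ ^ 2 ≤ (1 + δ) * ‖x‖ ^ 2

namespace IsNearIsometryOn

variable {T : E →ₗ[𝕜] F} {V : Set E} {δ : ℝ}

theorem abs_re_inner_mul_le (hT : IsNearIsometryOn T V δ) (hδ : 0 ≤ δ) {u w : E}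
    (huw : ⟪u, w⟫_𝕜 = 0) (hV : ∀ c : ℝ, u + (c : 𝕜) • w ∈ V) :
    |RCLike.re ⟪T u, T w⟫_𝕜| * ‖u‖ * √(1 - δ ^ 2) ≤ δ * ‖T u‖ ^ 2 * ‖w‖ := by
  have hquad : ∀ c : ℝ, (1 - δ) * (‖u‖ ^ 2 + c ^ 2 * ‖w‖ ^ 2)
      ≤ ‖T u‖ ^ 2 + 2 * c * RCLike.re ⟪T u, T w⟫_𝕜 + c ^ 2 * ‖T w‖ ^ 2 ∧
      ‖T u‖ ^ 2 + 2 * c * RCLike.re ⟪T u, T w⟫_𝕜 + c ^ 2 * ‖T w‖ ^ 2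
      ≤ (1 + δ) * (‖u‖ ^ 2 + c ^ 2 * ‖w‖ ^ 2) := by
    intro c
    have hpyth : ‖u + (c : 𝕜) • w‖ ^ 2 = ‖u‖ ^ 2 + c ^ 2 * ‖w‖ ^ 2 := by
      rw [@norm_add_sq 𝕜, inner_smul_right, huw, mul_zero, map_zero, norm_smul, RCLike.norm_ofReal,
        mul_pow, sq_abs]
      ring
    have himage : ‖T (u + (c : 𝕜) • w)‖ ^ 2
        = ‖T u‖ ^ 2 + 2 * c * RCLike.re ⟪T u, T w⟫_𝕜 + c ^ 2 * ‖T w‖ ^ 2 := by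
      rw [map_add, map_smul, @norm_add_sq 𝕜, inner_smul_right, RCLike.re_ofReal_mul, norm_smul,
        RCLike.norm_ofReal, mul_pow, sq_abs]
      ring
    rw [← hpyth, ← himage]
    exact hT _ (hV c)
  have hsq := sq_mul_sq_mul_one_sub_sq_le hquad
  rw [← pow_le_pow_iff_left₀ (by positivity) (by positivity) two_ne_zero, mul_pow, mul_pow,
    sq_abs, Real.sq_sqrt']
  rcases le_total 0 (1 - δ ^ 2) with hδ1 | hδ1
  · rw [max_eq_left hδ1]; nlinarith
  · rw [max_eq_right hδ1, mul_zero]; positivity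

theorem norm_mul_sqrt_one_sub_sq_le (hT : IsNearIsometryOn T V δ) (hδ₀ : 0 ≤ δ) (hδ₁ : δ < 1)
    {ι : Type*} (J : Finset ι) {u₀ : E} {u : ι → E} (h₀ : u₀ ∈ V)
    (horth : ∀ j ∈ J, ⟪u₀, u j⟫_𝕜 = 0) (hV : ∀ j ∈ J, ∀ c : ℝ, u₀ + (c : 𝕜) • u j ∈ V) :
    ‖u₀‖ * √(1 - δ ^ 2) ≤ √(1 + δ) * ‖T (u₀ + ∑ j ∈ J, u j)‖ + δ * ∑ j ∈ J, ‖u j‖ := by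
  set t := ‖u₀‖
  set L := ‖T u₀‖
  set X := fun j => RCLike.re ⟪T u₀, T (u j)⟫_𝕜
  have hX : ∀ j ∈ J, |X j| * t * √(1 - δ ^ 2) ≤ δ * L ^ 2 * ‖u j‖ := fun j hj =>
    hT.abs_re_inner_mul_le hδ₀ (horth j hj) (hV j hj)
  have hL : L ^ 2 = RCLike.re ⟪T u₀, T (u₀ + ∑ j ∈ J, u j)⟫_𝕜 - ∑ j ∈ J, X j := by
    rw [map_add, map_sum, inner_add_right, inner_sum, map_add, map_sum, inner_self_eq_norm_sq]
    ring
  have hLX : L ^ 2 ≤ L * ‖T (u₀ + ∑ j ∈ J, u j)‖ + ∑ j ∈ J, |X j| := by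
    have : -∑ j ∈ J, |X j| ≤ ∑ j ∈ J, X j := by
      rw [← sum_neg_distrib]
      exact sum_le_sum fun j _ => neg_abs_le (X j)
    linarith [re_inner_le_norm (𝕜 := 𝕜) (T u₀) (T (u₀ + ∑ j ∈ J, u j))]
  have hsum : (∑ j ∈ J, |X j|) * (t * √(1 - δ ^ 2)) ≤ L ^ 2 * (δ * ∑ j ∈ J, ‖u j‖) := by
    rw [sum_mul, mul_sum, mul_sum]
    exact sum_le_sum fun j hj => by linarith [hX j hj]
  have ht : t * √(1 - δ ^ 2) ≤ √(1 + δ) * L := by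
    have h1 := (hT u₀ h₀).1
    rw [← pow_le_pow_iff_left₀ (by positivity) (by positivity) two_ne_zero, mul_pow, mul_pow,
      Real.sq_sqrt (by nlinarith), Real.sq_sqrt (by linarith)]
    nlinarith
  rcases (norm_nonneg _ : 0 ≤ L).eq_or_lt with hL0 | hLpos
  · rw [show L = 0 from hL0.symm, mul_zero] at ht
    exact ht.trans (by positivity)
  refine le_of_mul_le_mul_left ?_ (pow_pos hLpos 2)
  calc L ^ 2 * (t * √(1 - δ ^ 2))
      ≤ (L * ‖T (u₀ + ∑ j ∈ J, u j)‖ + ∑ j ∈ J, |X j|) * (t * √(1 - δ ^ 2)) :=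
        mul_le_mul_of_nonneg_right hLX (by positivity)
    _ ≤ L * ‖T (u₀ + ∑ j ∈ J, u j)‖ * (√(1 + δ) * L) + L ^ 2 * (δ * ∑ j ∈ J, ‖u j‖) := by
        rw [add_mul]
        gcongr
    _ = L ^ 2 * (√(1 + δ) * ‖T (u₀ + ∑ j ∈ J, u j)‖ + δ * ∑ j ∈ J, ‖u j‖) := by ring

end IsNearIsometryOn

end NearIsometry

section Coordinates

variable {N : ℕ}

theorem l2_eq_norm_toLp (v : Fin N → ℂ) :
    l2 v = ‖(WithLp.toLp 2 v : EuclideanSpace ℂ (Fin N))‖ := by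
  rw [EuclideanSpace.norm_eq]
  rfl

theorem l2_sub_le (v w : Fin N → ℂ) : l2 (v - w) ≤ l2 v + l2 w := by
  simpa only [l2_eq_norm_toLp, WithLp.toLp_sub] using norm_sub_le _ _

theorem l0_le_card_of_support_subset {z : Fin N → ℂ} {T : Finset (Fin N)}
    (h : ∀ i, z i ≠ 0 → i ∈ T) : l0 z ≤ #T :=
  card_le_card fun i hi => h i (mem_filter.1 hi).2

theorem l0_indicator_le (S : Finset (Fin N)) (v : Fin N → ℂ) :
    l0 ((S : Set (Fin N)).indicator v) ≤ #S :=
  l0_le_card_of_support_subset fun i hi => by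
    by_contra h
    exact hi (Set.indicator_of_notMem (by simpa using h) v)

theorem l0_add_smul_le (z w : Fin N → ℂ) (c : ℂ) : l0 (z + c • w) ≤ l0 z + l0 w :=
  (l0_le_card_of_support_subset fun i hi => by
    by_contra h
    simp only [mem_union, mem_filter, mem_univ, true_and, not_or, not_not] at h
    simp [h.1, h.2] at hi).trans (card_union_le _ _)

theorem l0_comp_equiv (z : Fin N → ℂ) (e : Equiv.Perm (Fin N)) : l0 (z ∘ e) = l0 z :=
  card_equiv e fun i => by simp

theorem l2_comp_equiv (z : Fin N → ℂ) (e : Equiv.Perm (Fin N)) : l2 (z ∘ e) = l2 z := by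
  simp only [l2, Function.comp_apply, Equiv.sum_comp e fun i => ‖z i‖ ^ 2]

theorem l2_indicator (S : Finset (Fin N)) (v : Fin N → ℂ) :
    l2 ((S : Set (Fin N)).indicator v) = √(∑ i ∈ S, ‖v i‖ ^ 2) := by
  simp [l2, Set.indicator_apply, apply_ite]

theorem inner_toLp_indicator_eq_zero {S T : Finset (Fin N)} (hST : Disjoint S T)
    (v w : Fin N → ℂ) :
    ⟪(WithLp.toLp 2 ((S : Set (Fin N)).indicator v) : EuclideanSpace ℂ (Fin N)),
      WithLp.toLp 2 ((T : Set (Fin N)).indicator w)⟫_ℂ = 0 := by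
  rw [PiLp.inner_apply]
  refine sum_eq_zero fun i _ => ?_
  by_cases hi : i ∈ S
  · simp [Set.indicator_of_notMem (show i ∉ (T : Set (Fin N)) from disjoint_left.1 hST hi)]
  · simp [Set.indicator_of_notMem (show i ∉ (S : Set (Fin N)) from hi)]

end Coordinates

section RestrictedIsometry

variable {M N : ℕ}

def HasRIP (A : Matrix (Fin M) (Fin N) ℂ) (s : ℕ) (δ : ℝ) : Prop :=
  ∀ z : Fin N → ℂ, l0 z ≤ s →
    (1 - δ) * l2 z ^ 2 ≤ l2 (A *ᵥ z) ^ 2 ∧ l2 (A *ᵥ z) ^ 2 ≤ (1 + δ) * l2 z ^ 2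

def HasRobustNSP (A : Matrix (Fin M) (Fin N) ℂ) (k : ℕ) (ρ τ : ℝ) : Prop :=
  ∀ (v : Fin N → ℂ) (S : Finset (Fin N)), #S ≤ k →
    ∑ i ∈ S, ‖v i‖ ≤ ρ * ∑ i ∈ Sᶜ, ‖v i‖ + τ * l2 (A *ᵥ v)

variable {A : Matrix (Fin M) (Fin N) ℂ} {s : ℕ} {δ : ℝ}

theorem HasRIP.isNearIsometryOn (hA : HasRIP A s δ) :
    IsNearIsometryOn (Matrix.toLpLin 2 2 A) {x | l0 x.ofLp ≤ s} δ := by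
  intro x hx
  simpa [l2_eq_norm_toLp, Matrix.toLpLin_apply] using hA x.ofLp hx

theorem HasRIP.submatrix_equiv (hA : HasRIP A s δ) (e : Equiv.Perm (Fin N)) :
    HasRIP (A.submatrix id e) s δ := by
  intro z hz
  rw [Matrix.submatrix_mulVec_equiv, Function.comp_id, ← l2_comp_equiv z e.symm]
  exact hA _ (by rwa [l0_comp_equiv])

end RestrictedIsometry

section Blocks

variable {N k : ℕ}

def block (N k j : ℕ) : Finset (Fin N) := {i | (i : ℕ) / k = j}

theorem card_block (hk : 0 < k) (j : ℕ) : #(block N k j) = min ((j + 1) * k) N - j * k := by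
  rw [← card_map Fin.valEmbedding, ← Nat.card_Ico]
  congr 1
  ext n
  simp only [block, mem_map, mem_filter, mem_univ, true_and, Fin.valEmbedding_apply, mem_Ico,
    Nat.div_eq_iff hk]
  rw [add_mul, one_mul]
  constructor
  · rintro ⟨i, hi, rfl⟩
    have := i.isLt
    omega
  · intro hn
    exact ⟨⟨n, by omega⟩, by simp only; omega, rfl⟩

theorem card_block_le (hk : 0 < k) (j : ℕ) : #(block N k j) ≤ k := by
  rw [card_block hk, add_mul]
  omega

theorem sum_sum_block {G : Type*} [AddCommMonoid G] (f : Fin N → G) :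
    ∑ j ∈ range (N + 1), ∑ i ∈ block N k j, f i = ∑ i, f i :=
  sum_fiberwise_of_maps_to (g := fun i : Fin N => (i : ℕ) / k)
    (fun i _ => mem_range.2 (Nat.lt_succ_of_le ((Nat.div_le_self i k).trans i.isLt.le))) f

theorem sum_indicator_block (v : Fin N → ℂ) :
    ∑ j ∈ range (N + 1), (block N k j : Set (Fin N)).indicator v = v := by
  funext x
  simpa [Finset.sum_apply, Set.indicator_apply] using sum_sum_block (k := k) (Pi.single x (v x))

noncomputable def paddedNorm (v : Fin N → ℂ) (n : ℕ) : ℝ := if h : n < N then ‖v ⟨n, h⟩‖ else 0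

theorem paddedNorm_val (v : Fin N → ℂ) (i : Fin N) : paddedNorm v i = ‖v i‖ := dif_pos i.isLt

theorem paddedNorm_nonneg (v : Fin N → ℂ) (n : ℕ) : 0 ≤ paddedNorm v n := by
  unfold paddedNorm
  split_ifs <;> simp

variable {v : Fin N → ℂ}

theorem antitone_paddedNorm (hv : Antitone fun i => ‖v i‖) : Antitone (paddedNorm v) := by
  intro m n hmn
  unfold paddedNorm
  split_ifs with hn hm
  · exact hv (Fin.mk_le_mk.2 hmn)
  · omega
  · exact norm_nonneg _
  · exact le_rfl

theorem paddedNorm_le_norm_le_of_mem_block (hk : 0 < k) (hv : Antitone fun i => ‖v i‖) {j : ℕ}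
    {i : Fin N} (hi : i ∈ block N k j) :
    paddedNorm v ((j + 1) * k) ≤ ‖v i‖ ∧ ‖v i‖ ≤ paddedNorm v (j * k) := by
  have := (Nat.div_eq_iff hk).1 (mem_filter.1 hi).2
  rw [← paddedNorm_val]
  exact ⟨antitone_paddedNorm hv (by rw [add_mul]; omega), antitone_paddedNorm hv this.1⟩

theorem card_block_eq_or_paddedNorm_eq_zero (hk : 0 < k) (v : Fin N → ℂ) (j : ℕ) :
    #(block N k j) = k ∨ paddedNorm v ((j + 1) * k) = 0 := by
  by_cases h : (j + 1) * k < N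
  · left
    rw [card_block hk, min_eq_left h.le, add_mul]
    omega
  · exact Or.inr (dif_neg h)

theorem sum_norm_le_sum_block_zero (hk : 0 < k) (hv : Antitone fun i => ‖v i‖)
    {R : Finset (Fin N)} (hR : #R ≤ k) : ∑ i ∈ R, ‖v i‖ ≤ ∑ i ∈ block N k 0, ‖v i‖ := by
  refine sum_le_sum_of_card_le_of_forall_notMem_le (fun i _ => norm_nonneg _) ?_ ?_
  · intro i hi j hj
    simp only [block, mem_filter, mem_univ, true_and, Nat.div_eq_zero_iff, hk.ne', false_or]
      at hi hj
    exact hv (Fin.le_def.2 (by omega))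
  · have := card_le_univ R
    rw [card_block hk, Fintype.card_fin] at *
    omega

/-- The spreads of consecutive blocks telescope, and `k` times the smallest entry of the first
block is at most its `ℓ₁` norm. -/
theorem sqrt_mul_sum_sqrt_block_le (hk : 0 < k) (hv : Antitone fun i => ‖v i‖) :
    √k * ∑ j ∈ range N, √(∑ i ∈ block N k (j + 1), ‖v i‖ ^ 2)
      ≤ ∑ i ∈ (block N k 0)ᶜ, ‖v i‖ + (∑ i ∈ block N k 0, ‖v i‖) / 4 := by
  have hblock : ∀ j, √k * √(∑ i ∈ block N k (j + 1), ‖v i‖ ^ 2)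
      ≤ ∑ i ∈ block N k (j + 1), ‖v i‖
        + k * (paddedNorm v ((j + 1) * k) - paddedNorm v ((j + 1 + 1) * k)) / 4 :=
    fun j => sqrt_mul_sqrt_sum_sq_le (paddedNorm_nonneg v _)
      (antitone_paddedNorm hv (Nat.mul_le_mul_right k (Nat.le_succ _))) (card_block_le hk _)
      (fun i hi => paddedNorm_le_norm_le_of_mem_block hk hv hi)
      (card_block_eq_or_paddedNorm_eq_zero hk v _)
  have htail : ∑ j ∈ range N, ∑ i ∈ block N k (j + 1), ‖v i‖ = ∑ i ∈ (block N k 0)ᶜ, ‖v i‖ := by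
    have := sum_sum_block (k := k) fun i => ‖v i‖
    rw [sum_range_succ', ← sum_add_sum_compl (block N k 0)] at this
    linarith
  have htelescope : ∑ j ∈ range N, (paddedNorm v ((j + 1) * k) - paddedNorm v ((j + 1 + 1) * k))
      = paddedNorm v k - paddedNorm v ((N + 1) * k) := by
    rw [sum_range_sub' (fun j => paddedNorm v ((j + 1) * k)), zero_add, one_mul]
  have hfirst : k * paddedNorm v k ≤ ∑ i ∈ block N k 0, ‖v i‖ := by
    rcases card_block_eq_or_paddedNorm_eq_zero hk v 0 with hcard | hzero
    · calc k * paddedNorm v k = #(block N k 0) • paddedNorm v ((0 + 1) * k) := by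
            rw [hcard, nsmul_eq_mul, zero_add, one_mul]
        _ ≤ _ := card_nsmul_le_sum _ _ _ fun i hi =>
            (paddedNorm_le_norm_le_of_mem_block hk hv hi).1
    · rw [zero_add, one_mul] at hzero
      rw [hzero, mul_zero]
      exact sum_nonneg fun i _ => norm_nonneg _
  calc √k * ∑ j ∈ range N, √(∑ i ∈ block N k (j + 1), ‖v i‖ ^ 2)
      ≤ ∑ j ∈ range N, (∑ i ∈ block N k (j + 1), ‖v i‖
          + k * (paddedNorm v ((j + 1) * k) - paddedNorm v ((j + 1 + 1) * k)) / 4) := by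
        rw [mul_sum]
        exact sum_le_sum fun j _ => hblock j
    _ = ∑ i ∈ (block N k 0)ᶜ, ‖v i‖ + k * (paddedNorm v k - paddedNorm v ((N + 1) * k)) / 4 := by
        rw [sum_add_distrib, htail, ← sum_div, ← mul_sum, htelescope]
    _ ≤ _ := by linarith [paddedNorm_nonneg v ((N + 1) * k), Nat.cast_nonneg (α := ℝ) k,
        mul_nonneg (Nat.cast_nonneg (α := ℝ) k) (paddedNorm_nonneg v ((N + 1) * k))]

end Blocks

section NullSpaceProperty

variable {M N k : ℕ} {A : Matrix (Fin M) (Fin N) ℂ} {δ : ℝ}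

theorem HasRIP.sum_le_of_antitone (hA : HasRIP A (2 * k) δ) (hk : 0 < k) (hδ₀ : 0 ≤ δ)
    (hγ : δ / 4 < √(1 - δ ^ 2)) {v : Fin N → ℂ} (hv : Antitone fun i => ‖v i‖)
    {S : Finset (Fin N)} (hS : #S ≤ k) :
    ∑ i ∈ S, ‖v i‖ ≤ δ / (√(1 - δ ^ 2) - δ / 4) * ∑ i ∈ Sᶜ, ‖v i‖
      + √k * √(1 + δ) / (√(1 - δ ^ 2) - δ / 4) * l2 (A *ᵥ v) := by
  have hδ₁ : δ < 1 := by
    by_contra h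
    rw [Real.sqrt_eq_zero'.2 (by nlinarith)] at hγ
    linarith
  set u₀ := (block N k 0 : Set (Fin N)).indicator v
  set u := fun j => (block N k (j + 1) : Set (Fin N)).indicator v
  have hdecomp : u₀ + ∑ j ∈ range N, u j = v := by
    rw [add_comm, ← sum_range_succ' fun j => (block N k j : Set (Fin N)).indicator v]
    exact sum_indicator_block v
  have hsparse : ∀ j, l0 u₀ + l0 (u j) ≤ 2 * k := fun j => by
    linarith [l0_indicator_le (block N k 0) v, l0_indicator_le (block N k (j + 1)) v,
      card_block_le (N := N) hk 0, card_block_le (N := N) hk (j + 1)]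
  have hl2 : l2 u₀ * √(1 - δ ^ 2) ≤ √(1 + δ) * l2 (A *ᵥ v) + δ * ∑ j ∈ range N, l2 (u j) := by
    have := hA.isNearIsometryOn.norm_mul_sqrt_one_sub_sq_le hδ₀ hδ₁ (range N)
      (u₀ := WithLp.toLp 2 u₀) (u := fun j => WithLp.toLp 2 (u j))
      (by simpa using (hsparse 0).trans' (Nat.le_add_right _ _))
      (fun j _ => inner_toLp_indicator_eq_zero
        (disjoint_filter.2 fun i _ h0 h1 => by omega) v v)
      (fun j _ c => by simpa using (l0_add_smul_le u₀ (u j) c).trans (hsparse j))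
    simpa [l2_eq_norm_toLp, ← WithLp.toLp_sum, ← WithLp.toLp_add, hdecomp,
      Matrix.toLpLin_apply] using this
  have hCS : ∑ i ∈ block N k 0, ‖v i‖ ≤ √k * l2 u₀ := by
    rw [l2_indicator, ← Real.sqrt_mul (Nat.cast_nonneg _), Real.le_sqrt (by positivity)
      (by positivity)]
    exact sq_sum_le_card_mul_sum_sq.trans
      (mul_le_mul_of_nonneg_right (by exact_mod_cast card_block_le hk 0) (by positivity))
  have hblocks : √k * ∑ j ∈ range N, l2 (u j)
      ≤ ∑ i ∈ (block N k 0)ᶜ, ‖v i‖ + (∑ i ∈ block N k 0, ‖v i‖) / 4 := by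
    simpa only [u, l2_indicator] using sqrt_mul_sum_sqrt_block_le hk hv
  have htop : (∑ i ∈ block N k 0, ‖v i‖) * (√(1 - δ ^ 2) - δ / 4)
      ≤ δ * ∑ i ∈ (block N k 0)ᶜ, ‖v i‖ + √k * √(1 + δ) * l2 (A *ᵥ v) := by
    have := mul_le_mul_of_nonneg_left hl2 (Real.sqrt_nonneg k)
    nlinarith [mul_le_mul_of_nonneg_right hCS (Real.sqrt_nonneg (1 - δ ^ 2)),
      mul_le_mul_of_nonneg_left hblocks hδ₀]
  set γ := √(1 - δ ^ 2) - δ / 4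
  have hγ₀ : 0 < γ := sub_pos.2 hγ
  have hcompl := sum_add_sum_compl S fun i => ‖v i‖
  have hcompl₀ := sum_add_sum_compl (block N k 0) fun i => ‖v i‖
  have hdom := sum_norm_le_sum_block_zero hk hv hS
  rw [div_mul_eq_mul_div, div_mul_eq_mul_div, ← add_div, le_div_iff₀ hγ₀]
  nlinarith [mul_le_mul_of_nonneg_right hdom hγ₀.le]

theorem HasRIP.hasRobustNSP (hA : HasRIP A (2 * k) δ) (hk : 0 < k) (hδ₀ : 0 ≤ δ)
    (hγ : δ / 4 < √(1 - δ ^ 2)) :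
    HasRobustNSP A k (δ / (√(1 - δ ^ 2) - δ / 4)) (√k * √(1 + δ) / (√(1 - δ ^ 2) - δ / 4)) := by
  intro v S hS
  set σ := Tuple.sort fun i => -‖v i‖
  have hsorted : Antitone fun i => ‖v (σ i)‖ := fun i j hij =>
    neg_le_neg_iff.1 (Tuple.monotone_sort (fun i => -‖v i‖) hij)
  have hreindex : ∀ T T' : Finset (Fin N), (∀ i, i ∈ T' ↔ σ i ∈ T) →
      ∑ i ∈ T', ‖v (σ i)‖ = ∑ i ∈ T, ‖v i‖ := fun T T' h => sum_equiv σ h fun _ _ => rfl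
  set S' : Finset (Fin N) := {i | σ i ∈ S}
  have := (hA.submatrix_equiv σ).sum_le_of_antitone hk hδ₀ hγ hsorted (S := S')
    ((card_equiv σ fun i => by simp [S']).le.trans hS)
  rw [hreindex S S' (by simp [S']), hreindex Sᶜ S'ᶜ (by simp [S']),
    Matrix.submatrix_mulVec_equiv] at this
  simpa [Function.comp_def] using this

end NullSpaceProperty

section BasisPursuit

variable {M N k : ℕ}

theorem exists_sum_compl_le_sigma1 (k : ℕ) (x : Fin N → ℂ) :
    ∃ S : Finset (Fin N), #S ≤ k ∧ ∑ i ∈ Sᶜ, ‖x i‖ ≤ sigma1 k x := by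
  obtain ⟨S, hS, hmax⟩ := exists_max_image {S : Finset (Fin N) | #S ≤ k}
    (fun S => ∑ i ∈ S, ‖x i‖) ⟨∅, by simp⟩
  refine ⟨S, (mem_filter.1 hS).2, le_csInf ⟨_, 0, by simp [l0], rfl⟩ ?_⟩
  rintro _ ⟨z, hz, rfl⟩
  set T : Finset (Fin N) := {i | z i ≠ 0}
  have hT := hmax T (mem_filter.2 ⟨mem_univ _, hz⟩)
  have hxz : ∑ i ∈ Tᶜ, ‖x i‖ ≤ l1 (x - z) := by
    calc ∑ i ∈ Tᶜ, ‖x i‖ = ∑ i ∈ Tᶜ, ‖(x - z) i‖ :=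
          sum_congr rfl fun i hi => by simp_all [T]
      _ ≤ l1 (x - z) := sum_le_sum_of_subset_of_nonneg (subset_univ _) fun _ _ _ => norm_nonneg _
  linarith [sum_add_sum_compl S fun i => ‖x i‖, sum_add_sum_compl T fun i => ‖x i‖]

theorem sum_compl_norm_sub_le (x z : Fin N → ℂ) (S : Finset (Fin N)) :
    ∑ i ∈ Sᶜ, ‖(x - z) i‖
      ≤ l1 z - l1 x + ∑ i ∈ S, ‖(x - z) i‖ + 2 * ∑ i ∈ Sᶜ, ‖x i‖ := by
  have hS : ∑ i ∈ S, ‖x i‖ ≤ ∑ i ∈ S, ‖z i‖ + ∑ i ∈ S, ‖(x - z) i‖ := by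
    rw [← sum_add_distrib]
    exact sum_le_sum fun i _ => by simpa using norm_le_norm_add_norm_sub' (x i) (z i)
  have hSc : ∑ i ∈ Sᶜ, ‖(x - z) i‖ ≤ ∑ i ∈ Sᶜ, ‖z i‖ + ∑ i ∈ Sᶜ, ‖x i‖ := by
    rw [← sum_add_distrib]
    exact sum_le_sum fun i _ => by simpa [add_comm] using norm_sub_le (x i) (z i)
  unfold l1
  linarith [sum_add_sum_compl S fun i => ‖x i‖, sum_add_sum_compl S fun i => ‖z i‖]

theorem HasRobustNSP.one_sub_mul_l1_sub_le {A : Matrix (Fin M) (Fin N) ℂ} {ρ τ : ℝ}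
    (hA : HasRobustNSP A k ρ τ) (hρ : 0 ≤ ρ) (x z : Fin N → ℂ) :
    (1 - ρ) * l1 (x - z)
      ≤ (1 + ρ) * (l1 z - l1 x + 2 * sigma1 k x) + 2 * τ * l2 (A *ᵥ (x - z)) := by
  obtain ⟨S, hS, hσ⟩ := exists_sum_compl_le_sigma1 k x
  have hcone := sum_compl_norm_sub_le x z S
  have hnsp := hA (x - z) S hS
  have hsplit := sum_add_sum_compl S fun i => ‖(x - z) i‖
  change _ * ∑ i, ‖(x - z) i‖ ≤ _
  nlinarith [mul_le_mul_of_nonneg_left hσ (by linarith : 0 ≤ 1 + ρ)]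

end BasisPursuit

theorem modified_basis_pursuit_linf_attack_l1_bound_general
    (N k : ℕ) (hk : 0 < k) (δ : ℝ) (hδ0 : 0 ≤ δ) (hδ : δ < 0.624) :
    ∃ C D : ℝ, 0 < C ∧ 0 < D ∧
      ∀ (A : Matrix (Fin N) (Fin N) ℂ),
        (∀ z : Fin N → ℂ, l0 z ≤ 2 * k →
          (1 - δ) * l2 z ^ 2 ≤ l2 (A.mulVec z) ^ 2 ∧
            l2 (A.mulVec z) ^ 2 ≤ (1 + δ) * l2 z ^ 2) →
        ∀ (xhat y : Fin N → ℂ) (η'' : ℝ), 0 ≤ η'' →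
          l2 (A.mulVec xhat - y) ≤ Real.sqrt N * η'' →
          ∀ xhatstar : Fin N → ℂ,
            l2 (A.mulVec xhatstar - y) ≤ Real.sqrt N * η'' →
            (∀ z : Fin N → ℂ, l2 (A.mulVec z - y) ≤ Real.sqrt N * η'' → l1 xhatstar ≤ l1 z) →
            l1 (xhat - xhatstar) ≤ C * sigma1 k xhat + D * Real.sqrt (k * N) * η'' := by
  -- `δ < 4 / √41 ≈ 0.6247` is exactly the condition `ρ < 1`
  have hδ' : 5 / 4 * δ < √(1 - δ ^ 2) := by
    rw [Real.lt_sqrt (by positivity)]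
    nlinarith
  have hγ : 0 < √(1 - δ ^ 2) - δ / 4 := by linarith
  have hρ : 0 < 1 - δ / (√(1 - δ ^ 2) - δ / 4) := sub_pos.2 ((div_lt_one hγ).2 (by linarith))
  set γ := √(1 - δ ^ 2) - δ / 4
  set ρ := δ / γ
  refine ⟨2 * (1 + ρ) / (1 - ρ), 4 * (√(1 + δ) / γ) / (1 - ρ), by positivity,
    div_pos (mul_pos four_pos (div_pos (Real.sqrt_pos.2 (by linarith)) hγ)) hρ, ?_⟩
  intro A hA xhat y η'' hη hxhat xhatstar hxhatstar hmin
  have hNSP : HasRobustNSP A k ρ (√k * (√(1 + δ) / γ)) := by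
    rw [← mul_div_assoc]
    exact HasRIP.hasRobustNSP hA hk hδ0 (by linarith)
  have hbound := hNSP.one_sub_mul_l1_sub_le (div_nonneg hδ0 hγ.le) xhat xhatstar
  have hres : l2 (A *ᵥ (xhat - xhatstar)) ≤ 2 * (√N * η'') := by
    rw [Matrix.mulVec_sub, ← sub_sub_sub_cancel_right _ _ y]
    linarith [l2_sub_le (A *ᵥ xhat - y) (A *ᵥ xhatstar - y)]
  have hl1 := hmin xhat hxhat
  rw [Real.sqrt_mul (Nat.cast_nonneg k), div_mul_eq_mul_div, div_mul_eq_mul_div,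
    div_mul_eq_mul_div, ← add_div, le_div_iff₀ hρ]
  nlinarith [mul_le_mul_of_nonneg_left hres (by positivity : 0 ≤ 2 * (√k * (√(1 + δ) / γ))),
    mul_le_mul_of_nonneg_left hl1 (by positivity : 0 ≤ 1 + ρ)]

/-- Performance bound of the modified basis pursuit against an ℓ∞ attack
(ℓ₁-error bound). If the 2k-th restricted isometry constant of A is at most
δ < 0.624, then any minimizer xhat* of ‖z‖₁ subject to ‖Az − y‖₂ ≤ √N η''
satisfies ‖xhat − xhat*‖₁ ≤ C σ_k(xhat)₁ + D √(kN) η''. -/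
theorem modified_basis_pursuit_linf_attack_l1_bound
    (N k : ℕ) (hN : 0 < N) (hk : 0 < k) (δ : ℝ) (hδ0 : 0 ≤ δ) (hδ : δ < 0.624) :
    ∃ C D : ℝ, 0 < C ∧ 0 < D ∧
      ∀ (A : Matrix (Fin N) (Fin N) ℂ),
        (∀ z : Fin N → ℂ, l0 z ≤ 2 * k →
          (1 - δ) * l2 z ^ 2 ≤ l2 (A.mulVec z) ^ 2 ∧
            l2 (A.mulVec z) ^ 2 ≤ (1 + δ) * l2 z ^ 2) →
        ∀ (xhat y : Fin N → ℂ) (η'' : ℝ), 0 ≤ η'' →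
          l2 (A.mulVec xhat - y) ≤ Real.sqrt N * η'' →
          ∀ xhatstar : Fin N → ℂ,
            l2 (A.mulVec xhatstar - y) ≤ Real.sqrt N * η'' →
            (∀ z : Fin N → ℂ, l2 (A.mulVec z - y) ≤ Real.sqrt N * η'' → l1 xhatstar ≤ l1 z) →
            l1 (xhat - xhatstar) ≤ C * sigma1 k xhat + D * Real.sqrt (k * N) * η'' :=
  modified_basis_pursuit_linf_attack_l1_bound_general N k hk δ hδ0 hδ
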